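/- On the VB-mesh, the mesh step h_J = x_J − x_{J−1} at the transition index and the uniform step H = ψ′(α)/N satisfy ε(H − h_J)/(h_J H) ≤ ζ√ε/(aq), where ζ = (q−α)/√ε. -/

import Mathlib

/-- `ψ(t) = aεt/(q−t)`, the Bakhvalov mesh-generating function on the fine part. -/
noncomputable def psi (a ε q t : ℝ) : ℝ := a * ε * t / (q - t)

/-- `ψ′(t) = aεq/(q−t)²`. -/
noncomputable def psi' (a ε q t : ℝ) : ℝ := a * ε * q / (q - t) ^ 2

/-- The transition parameter `α = (q − √(aεq(1−q+aε)))/(1+aε)` of the VB-mesh. -/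
noncomputable def alph (a ε q : ℝ) : ℝ :=
  (q - Real.sqrt (a * ε * q * (1 - q + a * ε))) / (1 + a * ε)

/-- The mesh-generating function `λ`: `ψ` on `[0,α]`, its tangent line on `[α,1]`. -/
noncomputable def lam (a ε q t : ℝ) : ℝ :=
  if t ≤ alph a ε q then psi a ε q t
  else psi a ε q (alph a ε q) + psi' a ε q (alph a ε q) * (t - alph a ε q)

/-- VB-mesh points `x_i = λ(i/N)`. -/
noncomputable def meshx (a ε q : ℝ) (N i : ℕ) : ℝ := lam a ε q ((i : ℝ) / (N : ℝ))

/-- Mesh steps `h_i = x_i − x_{i−1}`. -/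
noncomputable def meshh (a ε q : ℝ) (N i : ℕ) : ℝ :=
  meshx a ε q N i - meshx a ε q N (i - 1)

/-- Averaged mesh steps `h̄_i = (h_i + h_{i+1})/2`. -/
noncomputable def meshhb (a ε q : ℝ) (N i : ℕ) : ℝ :=
  (meshh a ε q N i + meshh a ε q N (i + 1)) / 2

/-- The coarse (uniform) step `H = ψ′(α)/N` of the VB-mesh. -/
noncomputable def bigH (a ε q : ℝ) (N : ℕ) : ℝ := psi' a ε q (alph a ε q) / N

/-! Write `c = q − α` and recall `t_{J−1} < α ≤ t_J`. The step `h_J` is the increment of `ψ` over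
`[t_{J−1}, α]` plus that of its tangent line at `α` over `[α, t_J]`. The secant slope
`aεq/(c(q − t_{J−1}))` and the tangent slope `aεq/c²` are both at least `aεq/(c(c + 1/N))`, so
`h_J ≥ aεq/(c(Nc + 1))`; as `H = aεq/(Nc²)`, this gives `ε(1/h_J − 1/H) ≤ c/(aq)`. -/

section Bakhvalov

variable {a ε q : ℝ}

theorem alph_lt (ha : 0 < a) (hε : 0 < ε) (hq : 0 < q) : alph a ε q < q := by
  have haε : 0 < a * ε := mul_pos ha hε
  rw [alph, div_lt_iff₀ (by positivity)]
  nlinarith [Real.sqrt_nonneg (a * ε * q * (1 - q + a * ε))]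

theorem psi_sub_psi {s t : ℝ} (hs : s ≠ q) (ht : t ≠ q) :
    psi a ε q t - psi a ε q s = a * ε * q * (t - s) / ((q - t) * (q - s)) := by
  rw [psi, psi, div_sub_div _ _ (sub_ne_zero.2 ht.symm) (sub_ne_zero.2 hs.symm)]
  ring

theorem div_le_psi_add_tangent (hK : 0 ≤ a * ε * q) {α s t : ℝ} (hαq : α < q) (hsα : s < α)
    (hαt : α ≤ t) :
    a * ε * q * (t - s) / ((q - α) * (q - α + (t - s))) ≤
      psi a ε q α - psi a ε q s + psi' a ε q α * (t - α) := by
  have hc : 0 < q - α := sub_pos.2 hαq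
  have hqs : 0 < q - s := by linarith
  have hsecant : a * ε * q * (α - s) / ((q - α) * (q - α + (t - s))) ≤
      psi a ε q α - psi a ε q s := by
    rw [psi_sub_psi (by linarith) hαq.ne]
    gcongr
    linarith
  have htangent : a * ε * q * (t - α) / ((q - α) * (q - α + (t - s))) ≤
      psi' a ε q α * (t - α) := by
    rw [psi', ← mul_div_right_comm, sq]
    gcongr
    linarith
  calc a * ε * q * (t - s) / ((q - α) * (q - α + (t - s)))
      = a * ε * q * (α - s) / ((q - α) * (q - α + (t - s))) +
        a * ε * q * (t - α) / ((q - α) * (q - α + (t - s))) := by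
        rw [← add_div]; ring_nf
    _ ≤ _ := add_le_add hsecant htangent

theorem eps_mul_sub_div_le (ha : 0 < a) (hε : 0 < ε) (hq : 0 < q) {α s t n : ℝ}
    (hαq : α < q) (hsα : s < α) (hαt : α ≤ t) (hn : n * (t - s) = 1) :
    let h := psi a ε q α - psi a ε q s + psi' a ε q α * (t - α)
    ε * (psi' a ε q α / n - h) / (h * (psi' a ε q α / n)) ≤ (q - α) / (a * q) := by
  intro h
  have hc : 0 < q - α := sub_pos.2 hαq
  have hts : 0 < t - s := by linarith
  have hn0 : 0 < n := pos_of_mul_pos_left (hn ▸ one_pos) hts.le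
  have hK : 0 < a * ε * q := by positivity
  have hlow := div_le_psi_add_tangent hK.le hαq hsα hαt
  have hh : 0 < h := lt_of_lt_of_le (by positivity) hlow
  have hH : 0 < psi' a ε q α / n := by rw [psi']; positivity
  rw [mul_div_assoc, ← inv_sub_inv hh.ne' hH.ne']
  calc ε * (h⁻¹ - (psi' a ε q α / n)⁻¹)
      ≤ ε * (((q - α) * (q - α + (t - s))) / (a * ε * q * (t - s)) -
          (psi' a ε q α / n)⁻¹) := by
        gcongr
        rw [← inv_div]
        exact inv_anti₀ (by positivity) hlow
    _ = (q - α) / (a * q) := by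
        rw [psi', eq_one_div_of_mul_eq_one_right hn]
        field_simp
        ring

theorem lam_of_alph_le {t : ℝ} (ht : alph a ε q ≤ t) :
    lam a ε q t = psi a ε q (alph a ε q) + psi' a ε q (alph a ε q) * (t - alph a ε q) := by
  rcases ht.lt_or_eq with ht | rfl
  · exact if_neg ht.not_ge
  · simp [lam]

theorem meshh_of_transition {N J : ℕ} (hJ1 : 1 ≤ J)
    (hJl : ((J : ℝ) - 1) / N < alph a ε q) (hJr : alph a ε q ≤ (J : ℝ) / N) :
    meshh a ε q N J = psi a ε q (alph a ε q) - psi a ε q (((J : ℝ) - 1) / N) +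
      psi' a ε q (alph a ε q) * ((J : ℝ) / N - alph a ε q) := by
  rw [meshh, meshx, meshx, Nat.cast_sub hJ1, Nat.cast_one, lam_of_alph_le hJr, lam,
    if_pos hJl.le]
  ring

end Bakhvalov

theorem stmt_5_general (q a ε : ℝ) (hq0 : 0 < q) (ha : 0 < a) (hε : 0 < ε)
    (N : ℕ) (J : ℕ) (hJ1 : 1 ≤ J) (hJN : J ≤ N)
    (hJl : ((J : ℝ) - 1) / (N : ℝ) < alph a ε q)
    (hJr : alph a ε q ≤ (J : ℝ) / (N : ℝ)) :
    ε * (bigH a ε q N - meshh a ε q N J) / (meshh a ε q N J * bigH a ε q N) ≤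
      ((q - alph a ε q) / Real.sqrt ε) * Real.sqrt ε / (a * q) := by
  have hN : (N : ℝ) ≠ 0 := Nat.cast_ne_zero.2 (by omega)
  have hstep : (N : ℝ) * ((J : ℝ) / N - ((J : ℝ) - 1) / N) = 1 := by
    field_simp
    ring
  rw [div_mul_cancel₀ _ (Real.sqrt_pos.2 hε).ne', meshh_of_transition hJ1 hJl hJr, bigH]
  exact eps_mul_sub_div_le ha hε hq0 (alph_lt ha hε hq0) hJl hJr hstep

/-- at the transition index `J` of the VB-mesh,
`ε(H − h_J)/(h_J H) ≤ ζ√ε/(aq)`, where `ζ = (q−α)/√ε` and `H = ψ′(α)/N`. -/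
theorem stmt_5 (q a ε : ℝ) (hq0 : 0 < q) (hq1 : q < 1) (ha : 0 < a) (hε : 0 < ε)
    (haq : a * ε < q) (N : ℕ) (hN : 2 ≤ N) (J : ℕ) (hJ1 : 1 ≤ J) (hJN : J ≤ N)
    (hJl : ((J : ℝ) - 1) / (N : ℝ) < alph a ε q)
    (hJr : alph a ε q ≤ (J : ℝ) / (N : ℝ)) :
    ε * (bigH a ε q N - meshh a ε q N J) / (meshh a ε q N J * bigH a ε q N) ≤
      ((q - alph a ε q) / Real.sqrt ε) * Real.sqrt ε / (a * q) :=
  stmt_5_general q a ε hq0 ha hε N J hJ1 hJN hJl hJr
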